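/- arXiv:2211.13255 — 4 statements merged into one kernel-verified Lean document; each statement's English description precedes it below -/
import Mathlib

section
/- Suppose that for every prime p_r (with p_{r+1} the next prime after p_r), every pair of consecutive primes q < q' with p_{r+1} ≤ q < q' ≤ p_{r+1}^2 satisfies q' − q ≤ 2·p_r. Then Legendre's conjecture holds: for every natural number n ≥ 1 there exists a prime m with n^2 < m < (n+1)^2. -/
open Nat

/-- If for every pair of consecutive primes `p < p'`, every pair of consecutive primes
`q < q'` with `p' ≤ q < q' ≤ p'^2` satisfies `q' - q ≤ 2·p`, then Legendre's conjecture
holds: for every `n ≥ 1` there is a prime strictly between `n^2` and `(n+1)^2`. -/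
theorem legendre_of_gap_le_two_mul_prime
    (H : ∀ p p' : ℕ, p.Prime → p'.Prime → p < p' →
      (∀ q : ℕ, q.Prime → p < q → p' ≤ q) →
      ∀ q q' : ℕ, q.Prime → q'.Prime → q < q' →
        (∀ m : ℕ, q < m → m < q' → ¬ m.Prime) →
        p' ≤ q → q' ≤ p' ^ 2 → q' - q ≤ 2 * p) :
    ∀ n : ℕ, 1 ≤ n → ∃ m : ℕ, m.Prime ∧ n ^ 2 < m ∧ m < (n + 1) ^ 2 := by
  intro n hn
  by_contra hcon
  push_neg at hcon
  -- hcon : ∀ m, m.Prime → n^2 < m → (n+1)^2 ≤ m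
  rcases Nat.lt_or_ge n 4 with h4 | h4
  · interval_cases n
    · have := hcon 2 (by norm_num) (by norm_num); omega
    · have := hcon 5 (by norm_num) (by norm_num); omega
    · have := hcon 11 (by norm_num) (by norm_num); omega
  -- n ≥ 4 from here
  -- q' : smallest prime above n^2
  have hq'ex : ∃ m, m.Prime ∧ n ^ 2 < m := by
    obtain ⟨P, hP1, hP2⟩ := Nat.exists_infinite_primes (n ^ 2 + 1)
    exact ⟨P, hP2, by omega⟩
  set q' := Nat.find hq'ex with hq'def
  have hq'p : q'.Prime := (Nat.find_spec hq'ex).1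
  have hq'gt : n ^ 2 < q' := (Nat.find_spec hq'ex).2
  have hq'min : ∀ m, m.Prime → n ^ 2 < m → q' ≤ m := fun m hm h2 =>
    Nat.find_min' hq'ex ⟨hm, h2⟩
  have hq'ge : (n + 1) ^ 2 ≤ q' := hcon q' hq'p hq'gt
  -- q : largest prime ≤ n^2
  set q := Nat.findGreatest Nat.Prime (n ^ 2) with hqdef
  have h2n2 : 2 ≤ n ^ 2 := by nlinarith
  have hqp : q.Prime := Nat.findGreatest_spec h2n2 Nat.prime_two
  have hqle : q ≤ n ^ 2 := Nat.findGreatest_le _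
  have hqmax : ∀ m, m.Prime → m ≤ n ^ 2 → m ≤ q := fun m hm h2 =>
    Nat.le_findGreatest h2 hm
  have hn2np : ¬ (n ^ 2).Prime := by
    rw [sq]
    exact Nat.not_prime_mul (by omega) (by omega)
  have hqlt : q < n ^ 2 := lt_of_le_of_ne hqle (fun h => hn2np (h ▸ hqp))
  -- Bertrand: q' ≤ 2 * n^2
  obtain ⟨B, hBp, hB1, hB2⟩ := Nat.exists_prime_lt_and_le_two_mul (n ^ 2) (by positivity)
  have hq'le : q' ≤ 2 * n ^ 2 := le_trans (hq'min B hBp hB1) hB2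
  -- Bertrand: a prime r with 2n < r ≤ 4n, candidate for p'
  obtain ⟨r, hrp, hr1, hr2⟩ := Nat.exists_prime_lt_and_le_two_mul (2 * n) (by omega)
  have hrcand : q' ≤ r ^ 2 := by nlinarith
  -- p' : smallest prime with p' > n and q' ≤ p'^2
  have hp'ex : ∃ m, m.Prime ∧ n < m ∧ q' ≤ m ^ 2 := ⟨r, hrp, by omega, hrcand⟩
  set p' := Nat.find hp'ex with hp'def
  have hp'p : p'.Prime := (Nat.find_spec hp'ex).1
  have hp'gt : n < p' := (Nat.find_spec hp'ex).2.1
  have hp'sq : q' ≤ p' ^ 2 := (Nat.find_spec hp'ex).2.2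
  have hp'min : ∀ m, m.Prime → n < m → q' ≤ m ^ 2 → p' ≤ m := fun m h1 h2 h3 =>
    Nat.find_min' hp'ex ⟨h1, h2, h3⟩
  have hp'r : p' ≤ r := hp'min r hrp (by omega) hrcand
  have hp'n2 : p' ≤ n ^ 2 := by nlinarith
  have hp'q : p' ≤ q := hqmax p' hp'p hp'n2
  -- p : largest prime < p'
  set p := Nat.findGreatest Nat.Prime (p' - 1) with hpdef
  have hp'5 : 5 ≤ p' := by omega
  have hpp : p.Prime := Nat.findGreatest_spec (by omega : 2 ≤ p' - 1) Nat.prime_two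
  have hplt : p < p' := by
    have := Nat.findGreatest_le (P := Nat.Prime) (p' - 1)
    omega
  have hpmax : ∀ s, s.Prime → p < s → p' ≤ s := by
    intro s hs hps
    by_contra hc
    push_neg at hc
    have : s ≤ p := Nat.le_findGreatest (by omega) hs
    omega
  have hgapfree : ∀ m, q < m → m < q' → ¬ m.Prime := by
    intro m h1 h2 hm
    rcases le_or_gt m (n ^ 2) with h | h
    · exact absurd (hqmax m hm h) (by omega)
    · exact absurd (hq'min m hm h) (by omega)
  have hgap : q' - q ≤ 2 * p :=
    H p p' hpp hp'p hplt hpmax q q' hqp hq'p (by omega) hgapfree hp'q hp'sq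
  -- Now derive a contradiction
  rcases le_or_gt p n with hpn | hpn
  · -- gap ≥ 2n+2 > 2n ≥ 2p
    nlinarith [hq'ge, hqlt, hgap, Nat.sub_add_cancel (le_of_lt (lt_of_le_of_lt hqle hq'gt))]
  · -- p > n, so by minimality of p', p^2 < q'
    have hpsq : p ^ 2 < q' := by
      by_contra hc
      push_neg at hc
      exact absurd (hp'min p hpp hpn hc) (by omega)
    have hq'q : q + 2 * p ≥ q' := by omega
    -- p ≥ n + 1, q < n^2, q' > p^2 : contradiction
    have h1 : p * p < q' := by rw [← pow_two]; exact hpsq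
    have h3 : q < n * n := by rw [← pow_two]; exact hqlt
    have hp1 : p - 1 + 1 = p := Nat.succ_pred_eq_of_pos hpp.pos
    have hexp : p * p = (p - 1) * (p - 1) + 2 * (p - 1) + 1 := by
      conv_lhs => rw [← hp1]
      ring
    have hm : n * n ≤ (p - 1) * (p - 1) := Nat.mul_le_mul (by omega) (by omega)
    linarith [hm, h1, h3, hq'q, hexp, hp1]
end

section
/- Suppose that for every triple of consecutive primes p_{r-1} < p_r < p_{r+1}, every pair of consecutive primes q < q' with p_{r+1} ≤ q < q' ≤ p_{r+1}^2 satisfies q' − q ≤ 2·p_{r-1}. Then Legendre's conjecture holds: for every natural number n ≥ 1 there exists a prime m with n^2 < m < (n+1)^2. -/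
open Nat

/-- If for every triple of consecutive primes `a < b < c`, every pair of consecutive
primes `q < q'` with `c ≤ q < q' ≤ c^2` satisfies `q' - q ≤ 2·a`, then Legendre's
conjecture holds: for every `n ≥ 1` there is a prime strictly between `n^2` and `(n+1)^2`. -/
theorem legendre_of_gap_le_two_mul_prev_prime
    (H : ∀ a b c : ℕ, a.Prime → b.Prime → c.Prime → a < b → b < c →
      (∀ q : ℕ, a < q → q < b → ¬ q.Prime) →
      (∀ q : ℕ, b < q → q < c → ¬ q.Prime) →
      ∀ q q' : ℕ, q.Prime → q'.Prime → q < q' →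
        (∀ m : ℕ, q < m → m < q' → ¬ m.Prime) →
        c ≤ q → q' ≤ c ^ 2 → q' - q ≤ 2 * a) :
    ∀ n : ℕ, 1 ≤ n → ∃ m : ℕ, m.Prime ∧ n ^ 2 < m ∧ m < (n + 1) ^ 2 := by
  intro n hn
  by_cases hsmall : n < 4
  · interval_cases n
    · exact ⟨2, by norm_num⟩
    · exact ⟨5, by norm_num⟩
    · exact ⟨11, by norm_num⟩
  push_neg at hsmall
  by_contra hcon
  push_neg at hcon
  -- q : the largest prime ≤ n^2
  have h2n2 : 2 ≤ n ^ 2 := by nlinarith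
  set q := Nat.findGreatest Nat.Prime (n ^ 2) with hq_def
  have hqP : q.Prime := Nat.findGreatest_spec h2n2 Nat.prime_two
  have hq_le : q ≤ n ^ 2 := Nat.findGreatest_le _
  -- q' : the smallest prime > q
  have hex : ∃ p, p.Prime ∧ q < p := by
    obtain ⟨p, hp1, hp2⟩ := Nat.exists_infinite_primes (q + 1)
    exact ⟨p, hp2, hp1⟩
  set q' := Nat.find hex with hq'_def
  obtain ⟨hq'P, hqq'⟩ := Nat.find_spec hex
  have hq'_min : ∀ m, q < m → m < q' → ¬ m.Prime := by
    intro m h1 h2 hP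
    exact Nat.find_min hex h2 ⟨hP, h1⟩
  have hq'_gt : n ^ 2 < q' := by
    by_contra hle
    push_neg at hle
    have : q' ≤ q := Nat.le_findGreatest hle hq'P
    omega
  have hq'_ge : (n + 1) ^ 2 ≤ q' := hcon q' hq'P hq'_gt
  -- q' ≤ 2 n^2 by Bertrand
  have hq'_ub : q' ≤ 2 * n ^ 2 := by
    obtain ⟨p, hpP, hpl, hpu⟩ := Nat.exists_prime_lt_and_le_two_mul (n ^ 2) (by omega)
    exact le_trans (Nat.find_le ⟨hpP, lt_of_le_of_lt hq_le hpl⟩) hpu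
  -- c : the smallest prime > n with q' ≤ c^2
  have hexc : ∃ p, p.Prime ∧ n < p ∧ q' ≤ p ^ 2 := by
    obtain ⟨p, hpP, hpl, hpu⟩ := Nat.exists_prime_lt_and_le_two_mul (2 * n) (by omega)
    refine ⟨p, hpP, by omega, ?_⟩
    have : 2 * n + 1 ≤ p := by omega
    nlinarith
  set c := Nat.find hexc with hc_def
  obtain ⟨hcP, hnc, hq'c2⟩ := Nat.find_spec hexc
  have hc_ub : c ≤ 4 * n := by
    obtain ⟨p, hpP, hpl, hpu⟩ := Nat.exists_prime_lt_and_le_two_mul (2 * n) (by omega)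
    have hp2 : q' ≤ p ^ 2 := by
      have : 2 * n + 1 ≤ p := by omega
      nlinarith
    exact le_trans (Nat.find_le ⟨hpP, by omega, hp2⟩) (by omega)
  have hc_le_q : c ≤ q := by
    apply Nat.le_findGreatest _ hcP
    nlinarith
  have hc5 : 5 ≤ c := by omega
  -- b : the largest prime < c
  set b := Nat.findGreatest Nat.Prime (c - 1) with hb_def
  have hbP : b.Prime := Nat.findGreatest_spec (m := 3) (by omega) Nat.prime_three
  have hb3 : 3 ≤ b := Nat.le_findGreatest (by omega) Nat.prime_three
  have hb_lt_c : b < c := by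
    have := Nat.findGreatest_le (P := Nat.Prime) (c - 1)
    omega
  have hb_max : ∀ m, b < m → m < c → ¬ m.Prime := by
    intro m h1 h2
    exact Nat.findGreatest_is_greatest h1 (by omega)
  -- a : the largest prime < b
  set a := Nat.findGreatest Nat.Prime (b - 1) with ha_def
  have haP : a.Prime := Nat.findGreatest_spec (m := 2) (by omega) Nat.prime_two
  have ha_lt_b : a < b := by
    have := Nat.findGreatest_le (P := Nat.Prime) (b - 1)
    omega
  have ha_max : ∀ m, a < m → m < b → ¬ m.Prime := by
    intro m h1 h2
    exact Nat.findGreatest_is_greatest h1 (by omega)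
  -- apply the hypothesis
  have hgap : q' - q ≤ 2 * a :=
    H a b c haP hbP hcP ha_lt_b hb_lt_c ha_max hb_max q q' hqP hq'P hqq' hq'_min hc_le_q hq'c2
  have hgap' : q' ≤ q + 2 * a := by omega
  by_cases hb_n : b ≤ n
  · -- then a ≤ n - 1, gap ≤ 2n - 2 < 2n + 1
    have hsq : (n + 1) ^ 2 = n ^ 2 + 2 * n + 1 := by ring
    omega
  · -- b > n, so by minimality of c, q' > b^2
    push_neg at hb_n
    have hb2 : b ^ 2 < q' := by
      by_contra hle
      push_neg at hle
      exact Nat.find_min hexc hb_lt_c ⟨hbP, hb_n, hle⟩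
    have hnb : n + 1 ≤ b := hb_n
    have key : (n + 1) * b ≤ b * b := Nat.mul_le_mul_right b hnb
    have key2 : (n - 1) * (n + 1) ≤ (n - 1) * b := Nat.mul_le_mul_left _ hnb
    have hsq1 : b ^ 2 = b * b := by ring
    have hsq2 : (n - 1) * (n + 1) + 1 = n * n := by
      obtain ⟨m, rfl⟩ : ∃ m, n = m + 1 := ⟨n - 1, by omega⟩
      simp only [Nat.add_sub_cancel]
      ring
    have hsq3 : n ^ 2 = n * n := by ring
    have hsq4 : (n - 1) * b + 2 * b = (n + 1) * b := by
      have h : n - 1 + 2 = n + 1 := by omega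
      calc (n - 1) * b + 2 * b = (n - 1 + 2) * b := by ring
        _ = (n + 1) * b := by rw [h]
    have hn1 : 1 ≤ n * n := Nat.one_le_iff_ne_zero.mpr (by positivity)
    -- (n+1)*b = 2*b + (n-1)*b ≥ 2*b + n^2 - 1, so b*b ≥ n^2 + 2*b - 1
    -- but q' ≤ q + 2a ≤ n^2 + 2(b-1) and q' ≥ b^2 + 1 : contradiction
    omega
end

section
/- Let p_{r-1} < p_r < p_{r+1} be three consecutive primes and let M = p_{r-1}#. If p_r divides M − 1 and p_{r+1} divides M + 1, then every integer n with M − p_r < n < M + p_r satisfies gcd(n, p_{r+1}#) > 1; consequently the consecutive residues M − p_r and M + p_r of the reduced residue system modulo p_{r+1}# are at distance 2·p_r. -/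
open Nat

lemma prime_dvd_primorial_iff {q n : ℕ} (hq : q.Prime) : q ∣ primorial n ↔ q ≤ n := by
  unfold primorial
  constructor
  · intro h
    obtain ⟨p, hp, hqp⟩ := hq.prime.exists_mem_finset_dvd h
    simp only [Finset.mem_filter, Finset.mem_range] at hp
    have := (Nat.prime_dvd_prime_iff_eq hq hp.2).mp hqp
    omega
  · intro h
    exact Finset.dvd_prod_of_mem _ (by simp [Finset.mem_filter, Finset.mem_range, hq]; omega)

/-- For consecutive primes `a < b < c` with `M = a#`: if `b ∣ M - 1` and `c ∣ M + 1`,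
then every `n` with `M - b < n < M + b` satisfies `gcd(n, c#) > 1`; consequently
`M - b` and `M + b` are consecutive residues of the reduced residue system modulo
`c#` at distance `2·b`. -/
theorem gap_two_mul_middle_prime
    (a b c : ℕ) (ha : a.Prime) (hb : b.Prime) (hc : c.Prime)
    (hab : a < b) (hbc : b < c)
    (hconsec_ab : ∀ q : ℕ, a < q → q < b → ¬ q.Prime)
    (hconsec_bc : ∀ q : ℕ, b < q → q < c → ¬ q.Prime)
    (hdvd1 : b ∣ primorial a - 1) (hdvd2 : c ∣ primorial a + 1) :
    (∀ n : ℕ, primorial a - b < n → n < primorial a + b →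
        1 < Nat.gcd n (primorial c)) ∧
      Nat.Coprime (primorial a - b) (primorial c) ∧
      Nat.Coprime (primorial a + b) (primorial c) ∧
      (primorial a + b) - (primorial a - b) = 2 * b := by
  set M := primorial a with hM
  have ha2 : 2 ≤ a := ha.two_le
  have h2M : 2 ∣ M := (prime_dvd_primorial_iff Nat.prime_two).mpr ha2
  have hMpos : 0 < M := primorial_pos a
  have hM2 : 2 ≤ M := Nat.le_of_dvd hMpos h2M
  have hbM : b + 1 ≤ M := by
    have : b ≤ M - 1 := Nat.le_of_dvd (by omega) hdvd1
    omega
  -- any prime ≤ c divides primorial c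
  have hdvdc : ∀ p : ℕ, p.Prime → p ≤ c → p ∣ primorial c :=
    fun p hp hpc => (prime_dvd_primorial_iff hp).mpr hpc
  -- a prime < b is ≤ a; a prime dividing M is ≤ a
  have hlt_b : ∀ p : ℕ, p.Prime → p < b → p ≤ a := by
    intro p hp hpb
    by_contra h
    exact hconsec_ab p (by omega) hpb hp
  have hdvdM : ∀ p : ℕ, p.Prime → p ≤ a → p ∣ M :=
    fun p hp hpa => (prime_dvd_primorial_iff hp).mpr hpa
  have hMdvd : ∀ p : ℕ, p.Prime → p ∣ M → p ≤ a :=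
    fun p hp hpM => (prime_dvd_primorial_iff hp).mp hpM
  have hb3 : 3 ≤ b := by omega
  have hbodd : ¬ (2 ∣ b) := by
    intro h
    have := hb.eq_one_or_self_of_dvd 2 h
    omega
  have hcodd : ¬ (2 ∣ c) := by
    intro h
    have := hc.eq_one_or_self_of_dvd 2 h
    omega
  refine ⟨?_, ?_, ?_, by omega⟩
  · intro n hn1 hn2
    -- find a prime dividing both n and primorial c
    have key : ∃ p : ℕ, p.Prime ∧ p ∣ n ∧ p ∣ primorial c := by
      rcases lt_trichotomy n M with h | h | h
      · -- n < M, k = M - n, 1 ≤ k < b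
        set k := M - n with hk
        have hk1 : 1 ≤ k := by omega
        have hkb : k < b := by omega
        rcases eq_or_lt_of_le hk1 with h1 | h1
        · -- k = 1, n = M - 1, b ∣ n
          refine ⟨b, hb, ?_, hdvdc b hb (le_of_lt hbc)⟩
          have : n = M - 1 := by omega
          rw [this]; exact hdvd1
        · -- k ≥ 2, take minFac k
          have hk2 : 2 ≤ k := h1
          have hp := Nat.minFac_prime (by omega : k ≠ 1)
          set p := k.minFac
          have hpk : p ∣ k := Nat.minFac_dvd k
          have hple : p ≤ k := Nat.le_of_dvd (by omega) hpk
          have hpa : p ≤ a := hlt_b p hp (by omega)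
          have hpM : p ∣ M := hdvdM p hp hpa
          refine ⟨p, hp, ?_, hdvdc p hp (by omega)⟩
          have : n = M - k := by omega
          rw [this]; exact Nat.dvd_sub hpM hpk
      · -- n = M
        exact ⟨2, Nat.prime_two, h ▸ h2M, hdvdc 2 Nat.prime_two (by omega)⟩
      · -- n > M
        set k := n - M with hk
        have hk1 : 1 ≤ k := by omega
        have hkb : k < b := by omega
        rcases eq_or_lt_of_le hk1 with h1 | h1
        · refine ⟨c, hc, ?_, hdvdc c hc le_rfl⟩
          have : n = M + 1 := by omega
          rw [this]; exact hdvd2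
        · have hk2 : 2 ≤ k := h1
          have hp := Nat.minFac_prime (by omega : k ≠ 1)
          set p := k.minFac
          have hpk : p ∣ k := Nat.minFac_dvd k
          have hple : p ≤ k := Nat.le_of_dvd (by omega) hpk
          have hpa : p ≤ a := hlt_b p hp (by omega)
          have hpM : p ∣ M := hdvdM p hp hpa
          refine ⟨p, hp, ?_, hdvdc p hp (by omega)⟩
          have : n = M + k := by omega
          rw [this]; exact Nat.dvd_add hpM hpk
    obtain ⟨p, hp, hpn, hpc⟩ := key
    have : p ∣ Nat.gcd n (primorial c) := Nat.dvd_gcd hpn hpc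
    have hgpos : 0 < Nat.gcd n (primorial c) :=
      Nat.gcd_pos_of_pos_right _ (primorial_pos c)
    have := Nat.le_of_dvd hgpos this
    have := hp.two_le
    omega
  · -- Coprime (M - b) (primorial c)
    by_contra h
    obtain ⟨p, hp, hp1, hp2⟩ := Nat.Prime.not_coprime_iff_dvd.mp h
    have hpc : p ≤ c := (prime_dvd_primorial_iff hp).mp hp2
    rcases lt_trichotomy p b with hlt | heq | hgt
    · have hpa : p ≤ a := hlt_b p hp hlt
      have hpM : p ∣ M := hdvdM p hp hpa
      have : p ∣ b := by
        have := Nat.dvd_sub hpM hp1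
        rwa [Nat.sub_sub_self (by omega : b ≤ M)] at this
      have := (Nat.prime_dvd_prime_iff_eq hp hb).mp this
      omega
    · -- p = b : b ∣ M - b → b ∣ M → b ≤ a, contradiction
      subst heq
      have : p ∣ M := by
        have := Nat.dvd_add hp1 (dvd_refl p)
        rwa [Nat.sub_add_cancel (by omega : p ≤ M)] at this
      have := hMdvd p hp this
      omega
    · -- b < p ≤ c, so p = c
      have hpceq : p = c := by
        by_contra hne
        exact hconsec_bc p hgt (by omega) hp
      subst hpceq
      have : p ∣ b + 1 := by
        have := Nat.dvd_sub hdvd2 hp1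
        have h' : M + 1 - (M - b) = b + 1 := by omega
        rwa [h'] at this
      have hle := Nat.le_of_dvd (by omega) this
      have : p = b + 1 := by omega
      have : 2 ∣ p := by omega
      exact hcodd this
  · -- Coprime (M + b) (primorial c)
    by_contra h
    obtain ⟨p, hp, hp1, hp2⟩ := Nat.Prime.not_coprime_iff_dvd.mp h
    have hpc : p ≤ c := (prime_dvd_primorial_iff hp).mp hp2
    rcases lt_trichotomy p b with hlt | heq | hgt
    · have hpa : p ≤ a := hlt_b p hp hlt
      have hpM : p ∣ M := hdvdM p hp hpa
      have : p ∣ b := (Nat.dvd_add_right hpM).mp hp1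
      have := (Nat.prime_dvd_prime_iff_eq hp hb).mp this
      omega
    · subst heq
      have : p ∣ M := (Nat.dvd_add_iff_left (dvd_refl p)).mpr hp1
      have := hMdvd p hp this
      omega
    · have hpceq : p = c := by
        by_contra hne
        exact hconsec_bc p hgt (by omega) hp
      subst hpceq
      have : p ∣ b - 1 := by
        have := Nat.dvd_sub hp1 hdvd2
        have h' : M + b - (M + 1) = b - 1 := by omega
        rwa [h'] at this
      have hle := Nat.le_of_dvd (by omega) this
      omega
end

section
/- The value of the Jacobsthal function at 13# = 30030 is 22: every 22 consecutive integers contain at least one integer coprime to 30030, and there exist 21 consecutive integers none of which is coprime to 30030. Thus j(13#) = 2·11, twice the prime preceding 13. -/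
/-!
Coprimality to `n` depends only on the residue modulo `n`, so an integer window `[a, a + g)`
contains an integer coprime to `n` as soon as every window starting at a residue `r < n` does.
For `n = 30030` and `g = 22` this is a finite check, carried out by kernel evaluation; the
lower bound is the explicit run `9440, …, 9460` of `21` integers, each with a prime factor `≤ 13`.
-/

namespace Jacobsthal

def anyCoprime (n : ℕ) : ℕ → ℕ → Bool
  | _, 0 => false
  | r, g + 1 => Nat.gcd r n == 1 || anyCoprime n (r + 1) g

theorem anyCoprime_eq_true_iff (n r g : ℕ) :
    anyCoprime n r g = true ↔ ∃ t < g, Nat.Coprime (r + t) n := by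
  induction g generalizing r with
  | zero => simp [anyCoprime]
  | succ g ih =>
    simp only [anyCoprime, Bool.or_eq_true, beq_iff_eq, ih]
    constructor
    · rintro (hr | ⟨t, ht, hcop⟩)
      · exact ⟨0, g.succ_pos, hr⟩
      · exact ⟨t + 1, by omega, by rwa [← add_assoc, add_right_comm]⟩
    · rintro ⟨_ | t, ht, hcop⟩
      · exact Or.inl hcop
      · exact Or.inr ⟨t, by omega, by rwa [add_right_comm, add_assoc]⟩

/-- Halving the interval keeps the recursion depth of kernel evaluation at `d` rather than at
the length `2 ^ d` of the interval. -/
def allTwoPow (p : ℕ → Bool) : ℕ → ℕ → Bool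
  | 0, lo => p lo
  | d + 1, lo => allTwoPow p d lo && allTwoPow p d (lo + 2 ^ d)

theorem allTwoPow_eq_true_iff (p : ℕ → Bool) (d lo : ℕ) :
    allTwoPow p d lo = true ↔ ∀ r, lo ≤ r → r < lo + 2 ^ d → p r = true := by
  induction d generalizing lo with
  | zero =>
    simp only [allTwoPow, pow_zero]
    exact ⟨fun h r h₁ h₂ => by rwa [show r = lo by omega], fun h => h lo le_rfl (by omega)⟩
  | succ d ih =>
    simp only [allTwoPow, Bool.and_eq_true, ih, pow_succ]
    constructor
    · rintro ⟨hlow, hhigh⟩ r h₁ h₂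
      rcases lt_or_ge r (lo + 2 ^ d) with h | h
      · exact hlow r h₁ h
      · exact hhigh r h (by omega)
    · intro h
      exact ⟨fun r h₁ h₂ => h r h₁ (by omega), fun r h₁ h₂ => h r (by omega) (by omega)⟩

theorem exists_isCoprime_of_forall_lt {n g : ℕ} (hn : 0 < n)
    (h : ∀ r < n, ∃ t < g, Nat.Coprime (r + t) n) (a : ℤ) :
    ∃ k : ℤ, a ≤ k ∧ k < a + g ∧ IsCoprime k n := by
  have hn' : (0 : ℤ) < n := by exact_mod_cast hn
  have hr : ((a % n).toNat : ℤ) = a % n := Int.toNat_of_nonneg (Int.emod_nonneg a hn'.ne')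
  obtain ⟨t, htg, hcop⟩ := h (a % n).toNat (by have := Int.emod_lt_of_pos a hn'; omega)
  refine ⟨a + t, by omega, by omega, ?_⟩
  have hsplit : a + t = (((a % n).toNat + t : ℕ) : ℤ) + n * (a / n) := by
    push_cast
    linarith [Int.emod_add_mul_ediv a n]
  rwa [hsplit, IsCoprime.add_mul_left_left_iff, Nat.isCoprime_iff_coprime]

theorem not_isCoprime_of_forall_lt {n g a : ℕ} (h : ∀ t < g, ¬ Nat.Coprime (a + t) n)
    (k : ℤ) (h₁ : a ≤ k) (h₂ : k < a + g) : ¬ IsCoprime k n := by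
  lift k to ℕ using by omega
  rw [Nat.isCoprime_iff_coprime, show k = a + (k - a) by omega]
  exact h (k - a) (by omega)

theorem exists_coprime_of_lt_30030 : ∀ r < 30030, ∃ t < 22, Nat.Coprime (r + t) 30030 := by
  have hcheck : allTwoPow (fun r => anyCoprime 30030 r 22) 15 0 = true := by decide +kernel
  intro r hr
  rw [← anyCoprime_eq_true_iff]
  exact (allTwoPow_eq_true_iff _ _ _).1 hcheck r r.zero_le (by omega)

theorem not_coprime_9440_add : ∀ t < 21, ¬ Nat.Coprime (9440 + t) 30030 := by decide

end Jacobsthal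

/-- The Jacobsthal function at `13# = 30030` equals `22 = 2·11`: every `22` consecutive
integers contain one coprime to `30030`, and there are `21` consecutive integers none of
which is coprime to `30030`. -/
theorem jacobsthal_primorial_thirteen :
    (∀ a : ℤ, ∃ k : ℤ, a ≤ k ∧ k < a + 22 ∧ IsCoprime k (30030 : ℤ)) ∧
      (∃ a : ℤ, ∀ k : ℤ, a ≤ k → k < a + 21 → ¬ IsCoprime k (30030 : ℤ)) ∧
      22 = 2 * 11 :=
  ⟨Jacobsthal.exists_isCoprime_of_forall_lt (by norm_num)
      Jacobsthal.exists_coprime_of_lt_30030,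
    ⟨9440, Jacobsthal.not_isCoprime_of_forall_lt Jacobsthal.not_coprime_9440_add⟩, rfl⟩
end
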